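/- arXiv:2212.12329 — 2 statements merged into one kernel-verified Lean document; each statement's English description precedes it below -/
import Mathlib

section
/- Let n ≥ 2, d ≥ 1, e ≥ 1. Let W : Fin e → Fin d → ℝ and c : Fin e → ℝ, and let E = 𝟙 − I be the n×n extraction matrix (all-ones minus identity). For a feature tensor F : Fin d → Matrix (Fin n) (Fin n) ℝ, define R(F) k i j = max 0 ((∑ m, W k m * F m i j) + c k) and the category-2 layer output Φ²(F) k = (n − 1 : ℝ)⁻¹ • (E * R(F) k), where * is matrix multiplication. Then Φ² is permutation-equivariant: for every permutation σ of Fin n with permutation matrix P (P i j = 1 if σ i = j, else 0) and every F, Φ²(fun m => P * F m * Pᵀ) k = P * (Φ²(F) k) * Pᵀ for all k. -/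
/-! Conjugating by the permutation matrix of `σ` relabels rows and columns by `σ`. The ReLU layer
acts entrywise, so it commutes with this relabelling, and `E = 𝟙 - I` is unchanged by it, so left
multiplication by `E` commutes with it as well. -/

open Matrix

namespace Matrix

variable {ι α : Type*}

theorem permMatrix_mul_mul_transpose_permMatrix [Fintype ι] [DecidableEq ι] [NonAssocSemiring α]
    (σ : Equiv.Perm ι) (M : Matrix ι ι α) :
    σ.permMatrix α * M * (σ.permMatrix α)ᵀ = M.submatrix σ σ := by
  rw [transpose_permMatrix, PEquiv.toMatrix_toPEquiv_mul, PEquiv.mul_toMatrix_toPEquiv,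
    submatrix_submatrix, Equiv.Perm.inv_def, Equiv.symm_symm]
  rfl

theorem submatrix_ones_sub_one [DecidableEq ι] [AddGroupWithOne α] (σ : ι ≃ ι) :
    (of (fun _ _ => 1) - 1 : Matrix ι ι α).submatrix σ σ = of (fun _ _ => 1) - 1 := by
  ext i j
  simp [one_apply, σ.injective.eq_iff]

theorem submatrix_mul_of_submatrix_eq [Fintype ι] [NonUnitalNonAssocSemiring α]
    {A : Matrix ι ι α} (σ : ι ≃ ι) (hA : A.submatrix σ σ = A) (M : Matrix ι ι α) :
    (A * M).submatrix σ σ = A * M.submatrix σ σ := by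
  rw [← submatrix_mul_equiv A M σ σ σ, hA]

end Matrix

theorem stmt_7_general (n d e : ℕ)
    (W : Fin e → Fin d → ℝ) (c : Fin e → ℝ)
    (J E : Matrix (Fin n) (Fin n) ℝ)
    (hJ : ∀ i j, J i j = 1)
    (hE : E = J - 1)
    (R : (Fin d → Matrix (Fin n) (Fin n) ℝ) → Fin e → Matrix (Fin n) (Fin n) ℝ)
    (hR : ∀ F k i j, R F k i j = max 0 ((∑ m, W k m * F m i j) + c k))
    (Φ2 : (Fin d → Matrix (Fin n) (Fin n) ℝ) → Fin e → Matrix (Fin n) (Fin n) ℝ)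
    (hΦ2 : ∀ F k, Φ2 F k = ((n : ℝ) - 1)⁻¹ • (E * R F k))
    (σ : Equiv.Perm (Fin n)) (P : Matrix (Fin n) (Fin n) ℝ)
    (hP : ∀ i j, P i j = if σ i = j then 1 else 0)
    (F : Fin d → Matrix (Fin n) (Fin n) ℝ) (k : Fin e) :
    Φ2 (fun m => P * F m * Pᵀ) k = P * Φ2 F k * Pᵀ := by
  have hPσ : P = σ.permMatrix ℝ := by
    ext i j
    simp [hP, PEquiv.toMatrix_apply]
  have hE_inv : E.submatrix σ σ = E := by
    obtain rfl : J = of fun _ _ => 1 := ext hJ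
    subst hE
    exact submatrix_ones_sub_one σ
  have hR_inv : R (fun m => (F m).submatrix σ σ) k = (R F k).submatrix σ σ := by
    ext i j
    simp only [hR, submatrix_apply]
  simp only [hPσ, permMatrix_mul_mul_transpose_permMatrix]
  rw [hΦ2, hΦ2, hR_inv, ← submatrix_mul_of_submatrix_eq σ hE_inv]
  rfl -- `submatrix` commutes with `•` definitionally

theorem stmt_7 (n d e : ℕ) (hn : 2 ≤ n) (hd : 1 ≤ d) (he : 1 ≤ e)
    (W : Fin e → Fin d → ℝ) (c : Fin e → ℝ)
    (J E : Matrix (Fin n) (Fin n) ℝ)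
    (hJ : ∀ i j, J i j = 1)
    (hE : E = J - 1)
    (R : (Fin d → Matrix (Fin n) (Fin n) ℝ) → Fin e → Matrix (Fin n) (Fin n) ℝ)
    (hR : ∀ F k i j, R F k i j = max 0 ((∑ m, W k m * F m i j) + c k))
    (Φ2 : (Fin d → Matrix (Fin n) (Fin n) ℝ) → Fin e → Matrix (Fin n) (Fin n) ℝ)
    (hΦ2 : ∀ F k, Φ2 F k = ((n : ℝ) - 1)⁻¹ • (E * R F k))
    (σ : Equiv.Perm (Fin n)) (P : Matrix (Fin n) (Fin n) ℝ)
    (hP : ∀ i j, P i j = if σ i = j then 1 else 0)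
    (F : Fin d → Matrix (Fin n) (Fin n) ℝ) (k : Fin e) :
    Φ2 (fun m => P * F m * Pᵀ) k = P * Φ2 F k * Pᵀ :=
  stmt_7_general n d e W c J E hJ hE R hR Φ2 hΦ2 σ P hP F k
end

section
/- Let n ≥ 2, d ≥ 1, e ≥ 1. Let W : Fin e → Fin d → ℝ and c : Fin e → ℝ, and let E = 𝟙 − I be the n×n extraction matrix (all-ones minus identity). For a feature tensor F : Fin d → Matrix (Fin n) (Fin n) ℝ, define R(F) k i j = max 0 ((∑ m, W k m * F m i j) + c k) and the category-3 layer output Φ³(F) k = (n − 1 : ℝ)⁻¹ • (R(F) k * E), where * is matrix multiplication. Then Φ³ is permutation-equivariant: for every permutation σ of Fin n with permutation matrix P (P i j = 1 if σ i = j, else 0) and every F, Φ³(fun m => P * F m * Pᵀ) k = P * (Φ³(F) k) * Pᵀ for all k. -/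
open Matrix

namespace Matrix

variable {ι α : Type*} [DecidableEq ι]

theorem mul_mul_transpose_eq_submatrix_of_perm [Fintype ι] [NonAssocSemiring α]
    (σ : Equiv.Perm ι) {P : Matrix ι ι α} (hP : ∀ i j, P i j = if σ i = j then 1 else 0)
    (A : Matrix ι ι α) : P * A * Pᵀ = A.submatrix σ σ := by
  obtain rfl : P = σ.toPEquiv.toMatrix := by
    ext i j
    simp [hP]
  rw [← PEquiv.toMatrix_symm, ← Equiv.toPEquiv_symm, PEquiv.toMatrix_toPEquiv_mul,
    PEquiv.mul_toMatrix_toPEquiv, submatrix_submatrix, Equiv.symm_symm]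
  rfl

theorem submatrix_sub_one_of_forall_eq [Zero α] [One α] [Sub α] {a : α} {J : Matrix ι ι α}
    (hJ : ∀ i j, J i j = a) (σ : Equiv.Perm ι) : (J - 1).submatrix σ σ = J - 1 := by
  ext i j
  simp only [submatrix_apply, sub_apply, hJ, one_apply, σ.injective.eq_iff]

end Matrix

theorem stmt_8_general (n d e : ℕ)
    (W : Fin e → Fin d → ℝ) (c : Fin e → ℝ)
    (J E : Matrix (Fin n) (Fin n) ℝ)
    (hJ : ∀ i j, J i j = 1)
    (hE : E = J - 1)
    (R : (Fin d → Matrix (Fin n) (Fin n) ℝ) → Fin e → Matrix (Fin n) (Fin n) ℝ)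
    (hR : ∀ F k i j, R F k i j = max 0 ((∑ m, W k m * F m i j) + c k))
    (Φ3 : (Fin d → Matrix (Fin n) (Fin n) ℝ) → Fin e → Matrix (Fin n) (Fin n) ℝ)
    (hΦ3 : ∀ F k, Φ3 F k = ((n : ℝ) - 1)⁻¹ • (R F k * E))
    (σ : Equiv.Perm (Fin n)) (P : Matrix (Fin n) (Fin n) ℝ)
    (hP : ∀ i j, P i j = if σ i = j then 1 else 0)
    (F : Fin d → Matrix (Fin n) (Fin n) ℝ) (k : Fin e) :
    Φ3 (fun m => P * F m * Pᵀ) k = P * Φ3 F k * Pᵀ := by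
  have hconj := mul_mul_transpose_eq_submatrix_of_perm σ hP
  have hR_conj : R (fun m => (F m).submatrix σ σ) k = (R F k).submatrix σ σ := by
    ext i j
    simp only [hR, submatrix_apply]
  have hE_conj : E.submatrix σ σ = E := hE ▸ submatrix_sub_one_of_forall_eq hJ σ
  simp only [hconj, hΦ3, hR_conj]
  conv_lhs => rw [← hE_conj, submatrix_mul_equiv]
  rfl

theorem stmt_8 (n d e : ℕ) (hn : 2 ≤ n) (hd : 1 ≤ d) (he : 1 ≤ e)
    (W : Fin e → Fin d → ℝ) (c : Fin e → ℝ)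
    (J E : Matrix (Fin n) (Fin n) ℝ)
    (hJ : ∀ i j, J i j = 1)
    (hE : E = J - 1)
    (R : (Fin d → Matrix (Fin n) (Fin n) ℝ) → Fin e → Matrix (Fin n) (Fin n) ℝ)
    (hR : ∀ F k i j, R F k i j = max 0 ((∑ m, W k m * F m i j) + c k))
    (Φ3 : (Fin d → Matrix (Fin n) (Fin n) ℝ) → Fin e → Matrix (Fin n) (Fin n) ℝ)
    (hΦ3 : ∀ F k, Φ3 F k = ((n : ℝ) - 1)⁻¹ • (R F k * E))
    (σ : Equiv.Perm (Fin n)) (P : Matrix (Fin n) (Fin n) ℝ)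
    (hP : ∀ i j, P i j = if σ i = j then 1 else 0)
    (F : Fin d → Matrix (Fin n) (Fin n) ℝ) (k : Fin e) :
    Φ3 (fun m => P * F m * Pᵀ) k = P * Φ3 F k * Pᵀ :=
  stmt_8_general n d e W c J E hJ hE R hR Φ3 hΦ3 σ P hP F k
end
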